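/- For all real numbers a and b, the function g(x) = a·x + (b + x)·√(1 - x²) has at most two zeros in the open interval (0, 1). -/

import Mathlib

/-!
On `(0, 1)` the factor `√(1 - x²)` is positive, so the zeros of `g` are those of
`G(t) = a t / √(1 - t²) + t + b`. Its derivative `G'(t) = a / √(1 - t²)³ + 1` vanishes at most
once, because `t ↦ √(1 - t²)³` is injective on `[0, 1]`. By Rolle's theorem, three zeros of `G`
would produce two distinct zeros of `G'`.
-/

open Set

theorem Set.encard_le_two_of_forall_lt_not_lt {α : Type*} [LinearOrder α] {S : Set α}
    (h : ∀ x ∈ S, ∀ y ∈ S, ∀ z ∈ S, x < y → ¬ y < z) : S.encard ≤ 2 := by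
  by_contra! hS
  obtain ⟨t, htS, ht⟩ := exists_subset_encard_eq (Order.add_one_le_of_lt hS)
  have htfin : t.Finite := finite_of_encard_eq_coe (k := 3) ht
  have hcard : htfin.toFinset.card = 3 := by
    rw [htfin.encard_eq_coe_toFinset_card] at ht
    exact_mod_cast ht
  set e := htfin.toFinset.orderEmbOfFin hcard
  have he : ∀ i, e i ∈ S := fun i => htS (htfin.mem_toFinset.mp (Finset.orderEmbOfFin_mem _ _ i))
  exact h _ (he 0) _ (he 1) _ (he 2) (e.strictMono (by decide)) (e.strictMono (by decide))

theorem encard_zeros_le_two_of_hasDerivAt {f f' : ℝ → ℝ} {s : Set ℝ} (hs : s.OrdConnected)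
    (hf : ∀ x ∈ s, HasDerivAt f (f' x) x) (hf' : {x ∈ s | f' x = 0}.Subsingleton) :
    {x ∈ s | f x = 0}.encard ≤ 2 := by
  have rolle : ∀ {u v}, u ∈ s → v ∈ s → u < v → f u = 0 → f v = 0 →
      ∃ c ∈ Ioo u v, c ∈ s ∧ f' c = 0 := by
    intro u v hu hv huv hfu hfv
    have hsub : Icc u v ⊆ s := hs.out hu hv
    obtain ⟨c, hc, hc0⟩ := exists_hasDerivAt_eq_zero huv
      (fun t ht => (hf t (hsub ht)).continuousAt.continuousWithinAt) (hfu.trans hfv.symm)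
      (fun t ht => hf t (hsub (Ioo_subset_Icc_self ht)))
    exact ⟨c, hc, hsub (Ioo_subset_Icc_self hc), hc0⟩
  refine encard_le_two_of_forall_lt_not_lt ?_
  rintro x ⟨hx, hfx⟩ y ⟨hy, hfy⟩ z ⟨hz, hfz⟩ hxy hyz
  obtain ⟨c, hc, hcs, hc0⟩ := rolle hx hy hxy hfx hfy
  obtain ⟨d, hd, hds, hd0⟩ := rolle hy hz hyz hfy hfz
  exact (hc.2.trans hd.1).ne (hf' ⟨hcs, hc0⟩ ⟨hds, hd0⟩)

theorem one_sub_sq_pos_of_mem_Ioo {x : ℝ} (hx : x ∈ Ioo (-1) 1) : 0 < 1 - x ^ 2 := by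
  nlinarith [hx.1, hx.2]

theorem sqrt_one_sub_sq_ne_zero {x : ℝ} (hx : x ∈ Ioo (-1) 1) : √(1 - x ^ 2) ≠ 0 :=
  (Real.sqrt_pos.mpr (one_sub_sq_pos_of_mem_Ioo hx)).ne'

theorem hasDerivAt_div_sqrt_one_sub_sq {x : ℝ} (hx : x ∈ Ioo (-1) 1) :
    HasDerivAt (fun t => t / √(1 - t ^ 2)) (1 / √(1 - x ^ 2) ^ 3) x := by
  have hx2 := one_sub_sq_pos_of_mem_Ioo hx
  have hsqrt : HasDerivAt (fun t => √(1 - t ^ 2)) (1 / (2 * √(1 - x ^ 2)) * -(2 * x)) x :=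
    (Real.hasDerivAt_sqrt hx2.ne').comp x (by simpa using (hasDerivAt_pow 2 x).const_sub 1)
  refine ((hasDerivAt_id' x).div hsqrt (sqrt_one_sub_sq_ne_zero hx)).congr_deriv ?_
  field_simp
  linear_combination Real.sq_sqrt hx2.le

theorem injOn_sqrt_one_sub_sq_pow_three : InjOn (fun t : ℝ => √(1 - t ^ 2) ^ 3) (Icc 0 1) := by
  intro c hc d hd h
  have h1 : √(1 - c ^ 2) = √(1 - d ^ 2) :=
    (pow_left_inj₀ (Real.sqrt_nonneg _) (Real.sqrt_nonneg _) three_ne_zero).mp h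
  rw [Real.sqrt_inj (by nlinarith [hc.1, hc.2]) (by nlinarith [hd.1, hd.2])] at h1
  nlinarith [hc.1, hd.1]

theorem mul_add_mul_sqrt_one_sub_sq_eq (a b : ℝ) {x : ℝ} (hx : x ∈ Ioo (-1) 1) :
    a * x + (b + x) * √(1 - x ^ 2) = √(1 - x ^ 2) * (a * (x / √(1 - x ^ 2)) + x + b) := by
  have := sqrt_one_sub_sq_ne_zero hx
  field_simp
  ring

theorem stmt_9 (a b : ℝ) :
    ∃ s : Finset ℝ, s.card ≤ 2 ∧
      ∀ x ∈ Set.Ioo (0:ℝ) 1, a * x + (b + x) * Real.sqrt (1 - x^2) = 0 → x ∈ s := by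
  have hsub : Ioo (0 : ℝ) 1 ⊆ Ioo (-1) 1 := Ioo_subset_Ioo_left (by norm_num)
  set G : ℝ → ℝ := fun t => a * (t / √(1 - t ^ 2)) + t + b
  have hG' : ∀ t ∈ Ioo (0 : ℝ) 1, a * (1 / √(1 - t ^ 2) ^ 3) + 1 = 0 → √(1 - t ^ 2) ^ 3 = -a := by
    intro t ht h
    have := sqrt_one_sub_sq_ne_zero (hsub ht)
    field_simp at h
    linarith
  have hG : {x ∈ Ioo (0 : ℝ) 1 | G x = 0}.encard ≤ 2 := by
    refine encard_zeros_le_two_of_hasDerivAt ordConnected_Ioo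
      (f' := fun t => a * (1 / √(1 - t ^ 2) ^ 3) + 1)
      (fun x hx => (((hasDerivAt_div_sqrt_one_sub_sq (hsub hx)).const_mul a).add
        (hasDerivAt_id' x)).add_const b) ?_
    rintro c ⟨hc, hc0⟩ d ⟨hd, hd0⟩
    exact injOn_sqrt_one_sub_sq_pow_three (Ioo_subset_Icc_self hc) (Ioo_subset_Icc_self hd)
      ((hG' c hc hc0).trans (hG' d hd hd0).symm)
  have hfin : {x ∈ Ioo (0 : ℝ) 1 | G x = 0}.Finite := finite_of_encard_le_coe hG
  refine ⟨hfin.toFinset, ?_, fun x hx hgx => hfin.mem_toFinset.mpr ⟨hx, ?_⟩⟩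
  · rw [hfin.encard_eq_coe_toFinset_card] at hG
    exact_mod_cast hG
  · rw [mul_add_mul_sqrt_one_sub_sq_eq a b (hsub hx)] at hgx
    exact (mul_eq_zero.mp hgx).resolve_left (sqrt_one_sub_sq_ne_zero (hsub hx))
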